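/- Let d ∈ ℕ, let f : (0,∞) → ℂ be continuous, and let c_{−d}, …, c_{−1}, c_0, c_∞ ∈ ℂ and C > 0 satisfy: |f(u) − Σ_{j=−d}^{0} c_j u^j| ≤ C u for all u ∈ (0,1], and |f(u) − c_∞| ≤ C u^{−1/2} for all u ≥ 1. For 0 < Re s < 1/2 define ζ(s) := −(1/Γ(s)) [ ∫₀¹ u^{s−1}( f(u) − c_∞ − Σ_{j=−d}^{−1} c_j u^j ) du + ∫₁^∞ u^{s−1}( f(u) − c_∞ ) du + Σ_{j=−d}^{−1} c_j/(s+j) ]. Then ζ extends to a holomorphic function on the strip {s ∈ ℂ : −1 < Re s < 1/2}, and its value at s = 0 equals c_∞ − c_0. -/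

import Mathlib

open MeasureTheory Complex Set Filter Asymptotics

/-- The zeta function built from a function `f` with small-time expansion
`f(u) = Σ_{j=-d}^{0} c_j u^j + O(u)` and large-time behaviour `f(u) = c_∞ + O(u^{-1/2})`
extends holomorphically to the strip `{−1 < Re s < 1/2}` and its value at `s = 0` is
`c_∞ − c_0`. -/
theorem stmt7 (d : ℕ) (f : ℝ → ℂ) (hf : ContinuousOn f (Set.Ioi (0 : ℝ)))
    (c : ℤ → ℂ) (cinf : ℂ) (C : ℝ) (hC : 0 < C)
    (hsmall : ∀ u ∈ Set.Ioc (0 : ℝ) 1,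
      ‖f u - ∑ j ∈ Finset.Icc (-(d : ℤ)) 0, c j * (u : ℂ) ^ j‖ ≤ C * u)
    (hlarge : ∀ u : ℝ, 1 ≤ u → ‖f u - cinf‖ ≤ C * u ^ (-(1 : ℝ) / 2)) :
    ∃ Z : ℂ → ℂ,
      DifferentiableOn ℂ Z {s : ℂ | -1 < s.re ∧ s.re < 1 / 2} ∧
      (∀ s : ℂ, 0 < s.re → s.re < 1 / 2 →
        Z s = -(1 / Complex.Gamma s) *
          ((∫ u in Set.Ioc (0 : ℝ) 1, (u : ℂ) ^ (s - 1) *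
              (f u - cinf - ∑ j ∈ Finset.Icc (-(d : ℤ)) (-1), c j * (u : ℂ) ^ j))
            + (∫ u in Set.Ici (1 : ℝ), (u : ℂ) ^ (s - 1) * (f u - cinf))
            + ∑ j ∈ Finset.Icc (-(d : ℤ)) (-1), c j / (s + (j : ℂ)))) ∧
      Z 0 = cinf - c 0 := by
  -- the remainder functions
  set h1 : ℝ → ℂ := fun u => f u - ∑ j ∈ Finset.Icc (-(d : ℤ)) 0, c j * (u : ℂ) ^ j with hh1
  set g1 : ℝ → ℂ := Set.indicator (Set.Ioc 0 1) h1 with hg1def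
  set g2 : ℝ → ℂ := Set.indicator (Set.Ici 1) (fun u => f u - cinf) with hg2def
  -- continuity of the remainder on (0, ∞)
  have hsum_cont : ContinuousOn (fun u : ℝ =>
      ∑ j ∈ Finset.Icc (-(d : ℤ)) 0, c j * (u : ℂ) ^ j) (Set.Ioi (0 : ℝ)) := by
    apply continuousOn_finset_sum
    intro j _
    refine continuousOn_const.mul ?_
    intro u hu
    refine ((continuousAt_zpow₀ ((u : ℂ)) j ?_).comp
      Complex.continuous_ofReal.continuousAt).continuousWithinAt
    exact Or.inl (by exact_mod_cast (ne_of_gt (Set.mem_Ioi.mp hu)))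
  have hh1_cont : ContinuousOn h1 (Set.Ioi (0 : ℝ)) := hf.sub hsum_cont
  -- measurability
  have hmeas1 : AEStronglyMeasurable g1 (volume : Measure ℝ) := by
    rw [hg1def, aestronglyMeasurable_indicator_iff measurableSet_Ioc]
    exact (hh1_cont.mono Set.Ioc_subset_Ioi_self).aestronglyMeasurable measurableSet_Ioc
  have hmeas2 : AEStronglyMeasurable g2 (volume : Measure ℝ) := by
    rw [hg2def, aestronglyMeasurable_indicator_iff measurableSet_Ici]
    exact ((hf.sub continuousOn_const).mono
      (fun x (hx : x ∈ Set.Ici (1:ℝ)) => Set.mem_Ioi.mpr (lt_of_lt_of_le one_pos hx))).aestronglyMeasurable measurableSet_Ici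
  -- global bounds
  have hbd1 : ∀ u : ℝ, ‖g1 u‖ ≤ C := by
    intro u
    rw [hg1def]
    by_cases h : u ∈ Set.Ioc (0 : ℝ) 1
    · rw [Set.indicator_of_mem h]
      exact (hsmall u h).trans (by nlinarith [h.1.le, h.2])
    · simp [Set.indicator_of_notMem h, hC.le]
  have hbd2 : ∀ u : ℝ, ‖g2 u‖ ≤ C := by
    intro u
    rw [hg2def]
    by_cases h : u ∈ Set.Ici (1 : ℝ)
    · rw [Set.indicator_of_mem h]
      refine (hlarge u h).trans ?_
      have : (u : ℝ) ^ (-(1 : ℝ) / 2) ≤ u ^ (0 : ℝ) :=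
        Real.rpow_le_rpow_of_exponent_le h (by norm_num)
      rw [Real.rpow_zero] at this
      nlinarith
    · simp [Set.indicator_of_notMem h, hC.le]
  -- local integrability
  have hloc1 : LocallyIntegrableOn g1 (Set.Ioi (0 : ℝ)) :=
    ((memLp_top_of_bound hmeas1 C (Filter.Eventually.of_forall hbd1)).locallyIntegrable
      le_top).locallyIntegrableOn _
  have hloc2 : LocallyIntegrableOn g2 (Set.Ioi (0 : ℝ)) :=
    ((memLp_top_of_bound hmeas2 C (Filter.Eventually.of_forall hbd2)).locallyIntegrable
      le_top).locallyIntegrableOn _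
  -- asymptotics
  have hO1top : g1 =O[atTop] (· ^ (-(1 : ℝ))) := by
    apply Asymptotics.IsBigO.of_bound 1
    filter_upwards [eventually_gt_atTop (1 : ℝ)] with u hu
    rw [hg1def, Set.indicator_of_notMem (by simp [hu.not_ge] : u ∉ Set.Ioc (0 : ℝ) 1)]
    simp only [norm_zero]
    positivity
  have hO1bot : g1 =O[nhdsWithin 0 (Set.Ioi 0)] (· ^ (-(-1 : ℝ))) := by
    apply Asymptotics.IsBigO.of_bound C
    filter_upwards [Ioc_mem_nhdsGT (by norm_num : (0:ℝ) < 1)] with u hu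
    rw [hg1def, Set.indicator_of_mem hu]
    rw [neg_neg, Real.norm_of_nonneg (Real.rpow_nonneg hu.1.le _), Real.rpow_one]
    exact hsmall u hu
  have hO2top : g2 =O[atTop] (· ^ (-(1/2 : ℝ))) := by
    apply Asymptotics.IsBigO.of_bound C
    filter_upwards [eventually_ge_atTop (1 : ℝ)] with u hu
    rw [hg2def, Set.indicator_of_mem (Set.mem_Ici.mpr hu)]
    rw [Real.norm_of_nonneg (Real.rpow_nonneg (le_trans zero_le_one hu) _)]
    have := hlarge u hu
    rw [show (-(1:ℝ)/2) = -(1/2 : ℝ) by norm_num] at this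
    exact this
  have hO2bot : g2 =O[nhdsWithin 0 (Set.Ioi 0)] (· ^ (-(-1 : ℝ))) := by
    apply Asymptotics.IsBigO.of_bound 1
    filter_upwards [Ioo_mem_nhdsGT_of_mem (by norm_num : (0:ℝ) ∈ Set.Ico (0:ℝ) 1)] with u hu
    rw [hg2def, Set.indicator_of_notMem (by simp [hu.2.not_ge] : u ∉ Set.Ici (1 : ℝ))]
    simp only [norm_zero]
    positivity
  -- differentiability of the two Mellin transforms
  have hd1 : ∀ s : ℂ, -1 < s.re → s.re < 1 → DifferentiableAt ℂ (mellin g1) s :=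
    fun s hs1 hs2 => mellin_differentiableAt_of_isBigO_rpow hloc1 hO1top hs2 hO1bot hs1
  have hd2 : ∀ s : ℂ, -1 < s.re → s.re < 1/2 → DifferentiableAt ℂ (mellin g2) s :=
    fun s hs1 hs2 => mellin_differentiableAt_of_isBigO_rpow hloc2 hO2top hs2 hO2bot hs1
  refine ⟨fun s => -(1 / Complex.Gamma s) *
      (mellin g1 s + mellin g2 s + ∑ j ∈ Finset.Icc (-(d : ℤ)) (-1), c j / (s + (j : ℂ)))
      - (c 0 - cinf) * (1 / Complex.Gamma (s + 1)), ?_, ?_, ?_⟩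
  · -- differentiability on the strip
    intro s hs
    obtain ⟨hs1, hs2⟩ := hs
    apply DifferentiableAt.differentiableWithinAt
    have hG : DifferentiableAt ℂ (fun s : ℂ => 1 / Complex.Gamma s) s := by
      simpa only [one_div] using Complex.differentiable_one_div_Gamma s
    have hG1 : DifferentiableAt ℂ (fun s : ℂ => 1 / Complex.Gamma (s + 1)) s := by
      have : DifferentiableAt ℂ ((fun z : ℂ => 1 / Complex.Gamma z) ∘ (fun s : ℂ => s + 1)) s := by
        apply DifferentiableAt.comp
        · simpa only [one_div] using Complex.differentiable_one_div_Gamma (s + 1)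
        · exact differentiableAt_id.add_const 1
      exact this
    have hS : DifferentiableAt ℂ
        (fun s : ℂ => ∑ j ∈ Finset.Icc (-(d : ℤ)) (-1), c j / (s + (j : ℂ))) s := by
      apply DifferentiableAt.fun_sum
      intro j hj
      have hj1 : j ≤ -1 := (Finset.mem_Icc.mp hj).2
      have hne : s + (j : ℂ) ≠ 0 := by
        intro h
        have : (s + (j : ℂ)).re = 0 := by rw [h]; simp
        rw [Complex.add_re, Complex.intCast_re] at this
        have : (j : ℝ) ≤ -1 := by exact_mod_cast hj1
        linarith
      exact (differentiableAt_const _).div (differentiableAt_id.add_const _) hne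
    exact ((hG.neg.mul (((hd1 s hs1 (by linarith)).add (hd2 s hs1 hs2)).add hS)).sub
      (hG1.const_mul _))
  · -- the formula for 0 < re s < 1/2
    intro s hs0 hs2
    have hsne : s ≠ 0 := fun h => by rw [h] at hs0; simp at hs0
    have hconv1 : MellinConvergent g1 s :=
      mellinConvergent_of_isBigO_rpow hloc1 hO1top (by linarith) hO1bot (by linarith)
    have hconv2 : MellinConvergent g2 s :=
      mellinConvergent_of_isBigO_rpow hloc2 hO2top hs2 hO2bot (by linarith)
    have hindic := hasMellin_one_Ioc (s := s) hs0
    -- rewriting mellin g2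
    have hm2 : mellin g2 s = ∫ u in Set.Ici (1 : ℝ), (u : ℂ) ^ (s - 1) * (f u - cinf) := by
      rw [mellin, hg2def]
      rw [show (fun t : ℝ => (t : ℂ) ^ (s-1) • Set.indicator (Set.Ici 1) (fun u => f u - cinf) t)
          = fun t : ℝ => Set.indicator (Set.Ici 1)
            (fun u : ℝ => (u : ℂ) ^ (s-1) • (f u - cinf)) t by
        funext t
        by_cases h : t ∈ Set.Ici (1 : ℝ) <;>
          simp [Set.indicator_of_mem, Set.indicator_of_notMem, h]]
      rw [setIntegral_indicator measurableSet_Ici]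
      have hset : Set.Ioi (0:ℝ) ∩ Set.Ici 1 = Set.Ici 1 := by
        ext x; simp only [Set.mem_inter_iff, Set.mem_Ioi, Set.mem_Ici, and_iff_right_iff_imp]
        intro hx; linarith
      rw [hset]
      simp only [smul_eq_mul]
    -- rewriting mellin g1
    have hm1 : mellin g1 s = ∫ u in Set.Ioc (0 : ℝ) 1, (u : ℂ) ^ (s - 1) * h1 u := by
      rw [mellin, hg1def]
      rw [show (fun t : ℝ => (t : ℂ) ^ (s-1) • Set.indicator (Set.Ioc 0 1) h1 t)
          = fun t : ℝ => Set.indicator (Set.Ioc 0 1)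
            (fun u : ℝ => (u : ℂ) ^ (s-1) • h1 u) t by
        funext t
        by_cases h : t ∈ Set.Ioc (0 : ℝ) 1 <;>
          simp [Set.indicator_of_mem, Set.indicator_of_notMem, h]]
      rw [setIntegral_indicator measurableSet_Ioc]
      have hset : Set.Ioi (0:ℝ) ∩ Set.Ioc 0 1 = Set.Ioc 0 1 := by
        ext x; simp only [Set.mem_inter_iff, Set.mem_Ioi, Set.mem_Ioc, and_iff_right_iff_imp]
        exact fun hx => hx.1
      rw [hset]
      simp only [smul_eq_mul]
    -- the power integral
    have hpow : (∫ u in Set.Ioc (0 : ℝ) 1, (u : ℂ) ^ (s - 1)) = 1 / s := by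
      have := hindic.2
      rw [mellin] at this
      rw [show (fun t : ℝ => (t : ℂ) ^ (s-1) •
            Set.indicator (Set.Ioc (0:ℝ) 1) (fun _ => (1:ℂ)) t)
          = fun t : ℝ => Set.indicator (Set.Ioc (0:ℝ) 1)
            (fun u : ℝ => (u : ℂ) ^ (s-1)) t by
        funext t
        by_cases h : t ∈ Set.Ioc (0 : ℝ) 1 <;>
          simp [Set.indicator_of_mem, Set.indicator_of_notMem, h]] at this
      rw [setIntegral_indicator measurableSet_Ioc] at this
      have hset : Set.Ioi (0:ℝ) ∩ Set.Ioc 0 1 = Set.Ioc 0 1 := by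
        ext x; simp only [Set.mem_inter_iff, Set.mem_Ioi, Set.mem_Ioc, and_iff_right_iff_imp]
        exact fun hx => hx.1
      rw [hset] at this
      exact this
    -- integrability of the two pieces on Ioc 0 1
    have hint1 : IntegrableOn (fun u : ℝ => (u : ℂ) ^ (s - 1) * h1 u) (Set.Ioc (0:ℝ) 1) := by
      have this : IntegrableOn (fun t : ℝ => (t : ℂ) ^ (s - 1) • g1 t) (Set.Ioc (0:ℝ) 1) :=
        hconv1.mono_set Set.Ioc_subset_Ioi_self
      refine this.congr_fun (fun u hu => ?_) measurableSet_Ioc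
      beta_reduce
      rw [hg1def, Set.indicator_of_mem hu, smul_eq_mul]
    have hintpow : IntegrableOn (fun u : ℝ => (u : ℂ) ^ (s - 1)) (Set.Ioc (0:ℝ) 1) := by
      have this : IntegrableOn (fun t : ℝ => (t : ℂ) ^ (s - 1) •
          Set.indicator (Set.Ioc (0:ℝ) 1) (fun _ => (1:ℂ)) t) (Set.Ioc (0:ℝ) 1) :=
        hindic.1.mono_set Set.Ioc_subset_Ioi_self
      refine this.congr_fun (fun u hu => ?_) measurableSet_Ioc
      beta_reduce
      rw [Set.indicator_of_mem hu, smul_eq_mul, mul_one]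
    -- splitting the first integral
    have hI1 : (∫ u in Set.Ioc (0 : ℝ) 1, (u : ℂ) ^ (s - 1) *
        (f u - cinf - ∑ j ∈ Finset.Icc (-(d : ℤ)) (-1), c j * (u : ℂ) ^ j))
        = mellin g1 s + (c 0 - cinf) * (1 / s) := by
      have hsplit : ∀ u : ℝ, (u : ℂ) ^ (s - 1) *
          (f u - cinf - ∑ j ∈ Finset.Icc (-(d : ℤ)) (-1), c j * (u : ℂ) ^ j)
          = (u : ℂ) ^ (s - 1) * h1 u + (c 0 - cinf) * (u : ℂ) ^ (s - 1) := by
        intro u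
        have hsum : (∑ j ∈ Finset.Icc (-(d : ℤ)) 0, c j * (u : ℂ) ^ j)
            = (∑ j ∈ Finset.Icc (-(d : ℤ)) (-1), c j * (u : ℂ) ^ j) + c 0 := by
          have hins : Finset.Icc (-(d : ℤ)) 0 = insert 0 (Finset.Icc (-(d : ℤ)) (-1)) := by
            ext x
            simp only [Finset.mem_Icc, Finset.mem_insert]
            omega
          rw [hins, Finset.sum_insert (by simp)]
          simp [zpow_zero]
          ring
        rw [hh1]
        simp only
        rw [hsum]
        ring
      rw [show (fun u : ℝ => (u : ℂ) ^ (s - 1) *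
          (f u - cinf - ∑ j ∈ Finset.Icc (-(d : ℤ)) (-1), c j * (u : ℂ) ^ j))
          = fun u : ℝ => (u : ℂ) ^ (s - 1) * h1 u + (c 0 - cinf) * (u : ℂ) ^ (s - 1) by
        funext u; exact hsplit u]
      rw [integral_add hint1 (hintpow.const_mul _)]
      rw [hm1, integral_const_mul, hpow]
    beta_reduce
    rw [hI1, ← hm2]
    -- now pure algebra with the Gamma functional equation
    have hGam : (1 : ℂ) / Complex.Gamma (s + 1) = (1 / Complex.Gamma s) * (1 / s) := by
      rw [Complex.Gamma_add_one s hsne]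
      rw [one_div, mul_inv, one_div, one_div]
      ring
    rw [hGam]
    ring
  · -- value at 0
    simp only [Complex.Gamma_zero, zero_add, Complex.Gamma_one]
    simp only [div_zero, one_div, inv_one]
    ring
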